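/- arXiv:2411.15107 — 2 statements merged into one kernel-verified Lean document; each statement's English description precedes it below -/
import Mathlib

section
/- Every (V*)-set in a Lipschitz-free space is tight: if M is a complete pointed metric space and Γ ⊂ F(M) is a (V*)-set with respect to F(M), then for every ε > 0 there exists a compact set K ⊂ M with 0 ∈ K such that Γ ⊂ F(K) + ε B_{F(M)}. -/
open Filter Topology Metric Set

noncomputable section

/-- A formal series `∑ yₙ` in a normed space `Y` is weakly unconditionally Cauchy (WUC)
if `∑ |⟨φ, yₙ⟩| < ∞` for every continuous linear functional `φ` on `Y`. -/
def IsWUC {Y : Type*} [SeminormedAddCommGroup Y] [NormedSpace ℝ Y] (y : ℕ → Y) : Prop :=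
  ∀ φ : Y →L[ℝ] ℝ, Summable fun n => |φ (y n)|

/-- `Γ` is a (V*)-set in `X`: for every WUC series `∑ fₙ` in the dual `X*`,
`sup_{x ∈ Γ} |⟨x, fₙ⟩| → 0`. -/
def IsVStarSet {X : Type*} [SeminormedAddCommGroup X] [NormedSpace ℝ X] (Γ : Set X) : Prop :=
  ∀ f : ℕ → (X →L[ℝ] ℝ), IsWUC f →
    ∀ ε > (0 : ℝ), ∀ᶠ n in atTop, ∀ x ∈ Γ, |f n x| ≤ ε

/-- `Γ` is relatively weakly compact: its closure in the weak topology is compact. -/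
def RelWeaklyCompact {X : Type*} [SeminormedAddCommGroup X] [NormedSpace ℝ X]
    (Γ : Set X) : Prop :=
  IsCompact (closure ((toWeakSpace ℝ X) '' Γ))

/-- A normed space has Pełczyński's property (V*) if every (V*)-set is relatively
weakly compact. -/
def HasPropertyVStar (X : Type*) [SeminormedAddCommGroup X] [NormedSpace ℝ X] : Prop :=
  ∀ Γ : Set X, IsVStarSet Γ → RelWeaklyCompact Γ

/-- `F`, together with the map `δ : M → F`, is (a realization of) the Lipschitz-free space
over the pointed metric space `(M, o)`: `δ` is a base-point-preserving isometric embedding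
whose range has dense linear span, and every Lipschitz function `f : M → ℝ` vanishing at
the base point lifts to a continuous linear functional of norm at most `Lip(f)` (this
characterizes `F(M)`, with dual `Lip₀(M)`, up to isometric isomorphism). -/
structure IsLipschitzFree {M : Type*} [MetricSpace M] (o : M)
    {F : Type*} [NormedAddCommGroup F] [NormedSpace ℝ F] (δ : M → F) : Prop where
  isometry : Isometry δ
  map_base : δ o = 0
  dense_span : Dense (Submodule.span ℝ (Set.range δ) : Set F)
  lift : ∀ (L : NNReal) (f : M → ℝ), LipschitzWith L f → f o = 0 →
    ∃ φ : F →L[ℝ] ℝ, ‖φ‖ ≤ L ∧ ∀ x, φ (δ x) = f x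

/-- The subspace of `F` corresponding to the Lipschitz-free space `F(S)` over a subset
`S ⊆ M`: the closed linear span of `δ(S)`. -/
def freeSpan {M : Type*} [MetricSpace M] {F : Type*} [NormedAddCommGroup F]
    [NormedSpace ℝ F] (δ : M → F) (S : Set M) : Submodule ℝ F :=
  (Submodule.span ℝ (δ '' S)).topologicalClosure

theorem mem_freeSpan {M : Type*} [MetricSpace M] {F : Type*} [NormedAddCommGroup F]
    [NormedSpace ℝ F] (δ : M → F) {S : Set M} {x : M} (hx : x ∈ S) :
    δ x ∈ freeSpan δ S :=
  (Submodule.span ℝ (δ '' S)).le_topologicalClosure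
    (Submodule.subset_span ⟨x, hx, rfl⟩)

/-!
A (V*)-set cannot see infinitely many disjoint directions: if uniformly Lipschitz functions
`vₙ` vanishing at the base point have pairwise disjoint supports, then every signed sum `∑ ±vₙ`
is again uniformly Lipschitz, so `(vₙ)` is a WUC series in `F(M)* = Lip₀(M)` and
`sup_{γ ∈ Γ} ⟨vₙ, γ⟩ → 0`. Arguing by contradiction, and approximating each `γ` by finitely
supported elements, this shows that `Γ` is concentrated up to `ε / 2` on a ball around the base
point, and then that for every scale `d` the part of `Γ` still to be localized is concentrated up
to `εₖ` near a finite set. Iterating with `dₖ → 0` and `∑ εₖ ≤ ε / 2` yields nested finite nets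
with totally bounded union; `K` is its closure. For `f` `1`-Lipschitz vanishing on `K`, the
telescoping decomposition `f = f (1 - H₀) + ∑_{k<n} f (Hₖ - Hₖ₊₁) + f Hₙ` along the cutoffs `Hₖ`
gives `⟨f, γ⟩ ≤ ε`, since `f Hₙ` is uniformly Lipschitz (as `|f| ≤ dist(·, net)`) and tends to `0`
pointwise. Hahn–Banach turns this dual estimate into `dist(γ, F(K)) ≤ ε`.
-/

open scoped NNReal
open Function

section Plateau

variable {M : Type*} [MetricSpace M]

/-- `1` on the closed `d`-neighbourhood of `s`, `0` off its open `2 d`-neighbourhood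
(`infDist` to the empty set is `0`, so `plateau ∅ d = 1`). -/
def plateau (s : Set M) (d : ℝ≥0) (x : M) : ℝ :=
  max 0 (min 1 (2 - infDist x s / d))

lemma plateau_nonneg (s : Set M) (d : ℝ≥0) (x : M) : 0 ≤ plateau s d x :=
  le_max_left _ _

lemma plateau_le_one (s : Set M) (d : ℝ≥0) (x : M) : plateau s d x ≤ 1 :=
  max_le zero_le_one (min_le_left _ _)

lemma abs_plateau_le_one (s : Set M) (d : ℝ≥0) (x : M) : |plateau s d x| ≤ 1 :=
  abs_le.2 ⟨by linarith [plateau_nonneg s d x], plateau_le_one s d x⟩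

lemma plateau_eq_one {s : Set M} {d : ℝ≥0} {x : M} (hx : infDist x s ≤ d) :
    plateau s d x = 1 := by
  have : infDist x s / d ≤ 1 := div_le_one_of_le₀ hx d.2
  rw [plateau, min_eq_left (by linarith), max_eq_right zero_le_one]

lemma infDist_lt_of_plateau_ne_zero {s : Set M} {d : ℝ≥0} (hd : 0 < d) {x : M}
    (hx : plateau s d x ≠ 0) : infDist x s < 2 * d := by
  by_contra! h
  have : 2 ≤ infDist x s / d := (le_div_iff₀ (by exact_mod_cast hd)).2 h
  exact hx (max_eq_left ((min_le_right _ _).trans (by linarith)))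

lemma support_plateau_subset {s : Set M} (hs : s.Nonempty) {d : ℝ≥0} (hd : 0 < d) :
    support (plateau s d) ⊆ thickening (2 * d) s := fun _ hx =>
  (mem_thickening_iff_infDist_lt hs).2 (infDist_lt_of_plateau_ne_zero hd hx)

lemma lipschitzWith_plateau (s : Set M) (d : ℝ≥0) : LipschitzWith d⁻¹ (plateau s d) := by
  have affine : LipschitzWith d⁻¹ fun t : ℝ => 2 - t / d :=
    LipschitzWith.of_dist_le_mul fun a b => by
      rw [Real.dist_eq, Real.dist_eq, show 2 - a / d - (2 - b / d) = -((a - b) / d) by ring,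
        abs_neg, abs_div, NNReal.abs_eq, NNReal.coe_inv, div_eq_inv_mul]
  exact mul_one d⁻¹ ▸ ((affine.const_min 1).const_max 0).comp (lipschitz_infDist_pt s)

end Plateau

section LipschitzProduct

variable {M : Type*} [MetricSpace M]

lemma lipschitzWith_mul_of_abs_mul_sub_le {f g : M → ℝ} {Kf C : ℝ≥0} (hf : LipschitzWith Kf f)
    (hg : ∀ x, |g x| ≤ 1) (hfg : ∀ x y, g x ≠ 0 → |f x| * |g x - g y| ≤ C * dist x y) :
    LipschitzWith (Kf + C) fun x => f x * g x := by
  have key : ∀ x y, g x ≠ 0 → |f x * g x - f y * g y| ≤ (Kf + C) * dist x y := by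
    intro x y hx
    have hfxy : |f x - f y| ≤ Kf * dist x y := by simpa [Real.dist_eq] using hf.dist_le_mul x y
    calc |f x * g x - f y * g y| = |f x * (g x - g y) + (f x - f y) * g y| := by ring_nf
      _ ≤ |f x| * |g x - g y| + |f x - f y| * |g y| := by
        rw [← abs_mul, ← abs_mul]; exact abs_add_le _ _
      _ ≤ C * dist x y + Kf * dist x y * 1 := by
        have := mul_le_mul hfxy (hg y) (abs_nonneg _) (by positivity)
        linarith [hfg x y hx]
      _ = (Kf + C) * dist x y := by ring
  refine LipschitzWith.of_dist_le_mul fun x y => ?_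
  rw [Real.dist_eq]
  by_cases hx : g x = 0
  · by_cases hy : g y = 0
    · simp only [hx, hy, mul_zero, sub_zero, abs_zero]; positivity
    · rw [abs_sub_comm, dist_comm]; exact key y x hy
  · exact key x y hx

lemma LipschitzWith.mul_of_abs_le {f g : M → ℝ} {Kf Kg B : ℝ≥0} (hf : LipschitzWith Kf f)
    (hg : LipschitzWith Kg g) (hg1 : ∀ x, |g x| ≤ 1) (hfB : ∀ x, g x ≠ 0 → |f x| ≤ B) :
    LipschitzWith (Kf + B * Kg) fun x => f x * g x := by
  refine lipschitzWith_mul_of_abs_mul_sub_le hf hg1 fun x y hx => ?_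
  have hgxy : |g x - g y| ≤ Kg * dist x y := by simpa [Real.dist_eq] using hg.dist_le_mul x y
  calc |f x| * |g x - g y| ≤ B * (Kg * dist x y) := by gcongr; exact hfB x hx
    _ = ↑(B * Kg) * dist x y := by push_cast; ring

lemma LipschitzWith.mul_plateau_singleton {w : M → ℝ} {K : ℝ≥0} (hw : LipschitzWith K w)
    {o : M} (hwo : ∀ x, |w x| ≤ dist x o) {R : ℝ≥0} (hR : 0 < R) :
    LipschitzWith (K + 2) fun x => w x * plateau {o} R x := by
  refine (hw.mul_of_abs_le (lipschitzWith_plateau {o} R) (abs_plateau_le_one {o} R) (B := 2 * R)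
    fun x hx => (hwo x).trans ?_).weaken (le_of_eq ?_)
  · simpa using (infDist_lt_of_plateau_ne_zero hR hx).le
  · rw [mul_assoc, mul_inv_cancel₀ hR.ne', mul_one]

lemma abs_le_infDist_of_lipschitzWith_one {f : M → ℝ} (hf : LipschitzWith 1 f) {s : Set M}
    (hs : s.Nonempty) (hfs : ∀ p ∈ s, f p = 0) (x : M) : |f x| ≤ infDist x s :=
  (le_infDist hs).2 fun p hp => by simpa [hfs p hp, Real.dist_eq] using hf.dist_le_mul x p

lemma abs_le_dist_of_lipschitzWith_one {g : M → ℝ} {o : M} (hg : LipschitzWith 1 g)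
    (hg0 : g o = 0) (x : M) : |g x| ≤ dist x o := by
  simpa using abs_le_infDist_of_lipschitzWith_one hg (singleton_nonempty o)
    (fun p hp => (mem_singleton_iff.1 hp) ▸ hg0) x

/-- Although `plateau s d` is only `d⁻¹`-Lipschitz, weighting its increments by a
`1`-Lipschitz function vanishing on `s` gives a bound independent of `d`. -/
lemma abs_mul_abs_plateau_sub_le {f : M → ℝ} (hf : LipschitzWith 1 f) {s : Set M}
    (hs : s.Nonempty) (hfs : ∀ p ∈ s, f p = 0) {d : ℝ≥0} (hd : 0 < d) (x y : M) :
    |f x| * |plateau s d x - plateau s d y| ≤ 3 * dist x y := by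
  by_cases hzero : plateau s d x = 0 ∧ plateau s d y = 0
  · rw [hzero.1, hzero.2, sub_zero, abs_zero, mul_zero]; positivity
  have hnear : |f x| < 2 * d + dist x y := by
    refine (abs_le_infDist_of_lipschitzWith_one hf hs hfs x).trans_lt ?_
    rcases not_and_or.1 hzero with h | h
    · linarith [infDist_lt_of_plateau_ne_zero hd h, dist_nonneg (x := x) (y := y)]
    · linarith [infDist_lt_of_plateau_ne_zero hd h,
        infDist_le_infDist_add_dist (s := s) (x := x) (y := y)]
  rcases le_or_gt (dist x y) d with hxy | hxy
  · have hΔ : |plateau s d x - plateau s d y| ≤ dist x y / d := by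
      simpa [Real.dist_eq, div_eq_inv_mul] using (lipschitzWith_plateau s d).dist_le_mul x y
    calc |f x| * |plateau s d x - plateau s d y| ≤ (2 * d + dist x y) * (dist x y / d) := by
          gcongr
      _ ≤ (3 * d) * (dist x y / d) := by gcongr; linarith
      _ = 3 * dist x y := by field_simp
  · have hΔ : |plateau s d x - plateau s d y| ≤ 1 :=
      abs_sub_le_of_nonneg_of_le (plateau_nonneg s d x) (plateau_le_one s d x)
        (plateau_nonneg s d y) (plateau_le_one s d y)
    calc |f x| * |plateau s d x - plateau s d y| ≤ (2 * d + dist x y) * 1 := by gcongr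
      _ ≤ 3 * dist x y := by linarith

end LipschitzProduct

lemma card_filter_ne_zero_le_one {X ι : Type*} {s : Finset ι} {v : ι → X → ℝ}
    (hd : (s : Set ι).PairwiseDisjoint fun i => support (v i)) (x : X) :
    (s.filter fun i => v i x ≠ 0).card ≤ 1 :=
  Finset.card_le_one.2 fun _ hi _ hj =>
    hd.elim (Finset.mem_filter.1 hi).1 (Finset.mem_filter.1 hj).1
      (Set.not_disjoint_iff.2 ⟨x, (Finset.mem_filter.1 hi).2, (Finset.mem_filter.1 hj).2⟩)

lemma LipschitzWith.sum_of_pairwiseDisjoint {M ι : Type*} [MetricSpace M] (s : Finset ι)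
    {v : ι → M → ℝ} {Λ : ℝ≥0} (hv : ∀ i ∈ s, LipschitzWith Λ (v i))
    (hd : (s : Set ι).PairwiseDisjoint fun i => support (v i)) :
    LipschitzWith (2 * Λ) fun x => ∑ i ∈ s, v i x := by
  classical
  refine LipschitzWith.of_dist_le_mul fun x y => ?_
  -- at any two points at most two summands are nonzero
  set T := s.filter (fun i => v i x ≠ 0) ∪ s.filter (fun i => v i y ≠ 0)
  have hsum : ∑ i ∈ s, v i x - ∑ i ∈ s, v i y = ∑ i ∈ T, (v i x - v i y) := by
    rw [← Finset.sum_sub_distrib]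
    refine (Finset.sum_subset (Finset.union_subset (Finset.filter_subset _ _)
      (Finset.filter_subset _ _)) fun i hi hiT => ?_).symm
    simp only [Finset.mem_union, Finset.mem_filter, not_or, not_and, not_not] at hiT
    rw [(hiT.1 hi), (hiT.2 hi), sub_zero]
  have hcard : (T.card : ℝ) ≤ 2 := by
    have := (Finset.card_union_le _ _).trans
      (add_le_add (card_filter_ne_zero_le_one hd x) (card_filter_ne_zero_le_one hd y))
    exact_mod_cast this
  have hterm : ∀ i ∈ T, |v i x - v i y| ≤ Λ * dist x y := fun i hi => by
    have hi : i ∈ s := by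
      rcases Finset.mem_union.1 hi with h | h <;> exact (Finset.mem_filter.1 h).1
    simpa [Real.dist_eq] using (hv i hi).dist_le_mul x y
  rw [Real.dist_eq, hsum]
  calc |∑ i ∈ T, (v i x - v i y)| ≤ ∑ i ∈ T, |v i x - v i y| := Finset.abs_sum_le_sum_abs _ _
    _ ≤ T.card * (Λ * dist x y) := by
      simpa using Finset.sum_le_sum hterm
    _ ≤ 2 * (Λ * dist x y) := by gcongr
    _ = ↑(2 * Λ) * dist x y := by push_cast; ring

lemma ContinuousLinearMap.abs_apply_le_of_mem_span {F : Type*} [NormedAddCommGroup F]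
    [NormedSpace ℝ F] {φ : F →L[ℝ] ℝ} {s : Set F} (hφ : ∀ y ∈ s, φ y = 0) {μ : F}
    (hμ : μ ∈ Submodule.span ℝ s) (γ : F) : |φ γ| ≤ ‖φ‖ * ‖γ - μ‖ := by
  have hμ0 : φ μ = 0 := (Submodule.span_le (p := LinearMap.ker (φ : F →ₗ[ℝ] ℝ)) |>.2 hφ) hμ
  simpa [map_sub, hμ0] using φ.le_opNorm (γ - μ)

lemma Submodule.exists_norm_sub_lt_of_forall_dual_le {E : Type*} [NormedAddCommGroup E]
    [NormedSpace ℝ E] (Y : Submodule ℝ E) {x : E} {c c' : ℝ}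
    (h : ∀ φ : E →L[ℝ] ℝ, ‖φ‖ ≤ 1 → (∀ y ∈ Y, φ y = 0) → φ x ≤ c) (hc : c < c') :
    ∃ y ∈ Y, ‖x - y‖ < c' := by
  obtain ⟨g, hg, hgx⟩ := exists_dual_vector'' ℝ (Y.mkQ x)
  have hmkQ : ‖Y.mkQL‖ ≤ 1 := ContinuousLinearMap.opNorm_le_bound _ zero_le_one fun z => by
    simpa using Submodule.Quotient.norm_mk_le Y z
  have hφ : ‖g.comp Y.mkQL‖ ≤ 1 :=
    (g.opNorm_comp_le _).trans (mul_le_one₀ hg (norm_nonneg _) hmkQ)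
  have hdist : infDist x Y ≤ c := by
    have hnorm : ‖Y.mkQ x‖ = infDist x Y := QuotientAddGroup.norm_mk (S := Y.toAddSubgroup) x
    rw [← hnorm]
    refine le_of_eq_of_le (by simpa using hgx.symm) (h _ hφ fun y hy => ?_)
    simp [(Submodule.Quotient.mk_eq_zero Y).2 hy]
  obtain ⟨y, hy, hxy⟩ := (infDist_lt_iff ⟨0, Y.zero_mem⟩).1 (hdist.trans_lt hc)
  exact ⟨y, hy, by rwa [← dist_eq_norm]⟩

open Classical in
/-- The functional `φ` on `F` with `φ ∘ δ = u`; `0` if there is none. -/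
def freeLift {M F : Type*} [NormedAddCommGroup F] [NormedSpace ℝ F] (δ : M → F)
    (u : M → ℝ) : F →L[ℝ] ℝ :=
  if h : ∃ φ : F →L[ℝ] ℝ, ∀ x, φ (δ x) = u x then h.choose else 0

namespace IsLipschitzFree

variable {M : Type*} [MetricSpace M] {o : M} {F : Type*} [NormedAddCommGroup F]
  [NormedSpace ℝ F] {δ : M → F}

lemma ext_of_apply_delta (hδ : IsLipschitzFree o δ) {φ ψ : F →L[ℝ] ℝ}
    (h : ∀ x, φ (δ x) = ψ (δ x)) : φ = ψ :=
  ContinuousLinearMap.ext_on hδ.dense_span (by rintro _ ⟨x, rfl⟩; exact h x)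

lemma freeLift_eq (hδ : IsLipschitzFree o δ) {u : M → ℝ} {φ : F →L[ℝ] ℝ}
    (hφ : ∀ x, φ (δ x) = u x) : freeLift δ u = φ := by
  have h : ∃ φ : F →L[ℝ] ℝ, ∀ x, φ (δ x) = u x := ⟨φ, hφ⟩
  rw [freeLift, dif_pos h]
  exact hδ.ext_of_apply_delta fun x => (h.choose_spec x).trans (hφ x).symm

lemma freeLift_apply_delta (hδ : IsLipschitzFree o δ) {K : ℝ≥0} {u : M → ℝ}
    (hu : LipschitzWith K u) (hu0 : u o = 0) (x : M) : freeLift δ u (δ x) = u x := by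
  obtain ⟨φ, -, hφ⟩ := hδ.lift K u hu hu0
  rw [hδ.freeLift_eq hφ, hφ]

lemma norm_freeLift_le (hδ : IsLipschitzFree o δ) {K : ℝ≥0} {u : M → ℝ}
    (hu : LipschitzWith K u) (hu0 : u o = 0) : ‖freeLift δ u‖ ≤ K := by
  obtain ⟨φ, hφK, hφ⟩ := hδ.lift K u hu hu0
  rwa [hδ.freeLift_eq hφ]

lemma norm_le_of_apply_delta (hδ : IsLipschitzFree o δ) {K : ℝ≥0} {u : M → ℝ}
    (hu : LipschitzWith K u) (hu0 : u o = 0) {φ : F →L[ℝ] ℝ} (hφ : ∀ x, φ (δ x) = u x) :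
    ‖φ‖ ≤ K :=
  hδ.freeLift_eq hφ ▸ hδ.norm_freeLift_le hu hu0

lemma freeLift_sub_apply (hδ : IsLipschitzFree o δ) {Ku Kv : ℝ≥0} {u v : M → ℝ}
    (hu : LipschitzWith Ku u) (hv : LipschitzWith Kv v) (hu0 : u o = 0) (hv0 : v o = 0)
    (γ : F) : freeLift δ (fun x => u x - v x) γ = freeLift δ u γ - freeLift δ v γ := by
  have h : freeLift δ (fun x => u x - v x) = freeLift δ u - freeLift δ v :=
    hδ.freeLift_eq fun x => by
      rw [sub_apply, hδ.freeLift_apply_delta hu hu0, hδ.freeLift_apply_delta hv hv0]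
  rw [h, sub_apply]

lemma exists_finset_norm_sub_lt (hδ : IsLipschitzFree o δ) (γ : F) {q : ℝ} (hq : 0 < q) :
    ∃ S : Finset M, ∃ μ ∈ Submodule.span ℝ (δ '' S), ‖γ - μ‖ < q := by
  classical
  obtain ⟨μ, hμ, hγμ⟩ := Metric.mem_closure_iff.1 (hδ.dense_span γ) q hq
  obtain ⟨T, hT, hμT⟩ := Submodule.mem_span_finite_of_mem_span hμ
  obtain ⟨S, -, rfl⟩ := Finset.subset_set_image_iff.1 (Set.image_univ (f := δ) ▸ hT)
  exact ⟨S, μ, by rwa [Finset.coe_image] at hμT, by rwa [← dist_eq_norm]⟩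

lemma abs_freeLift_le_of_eqOn_zero (hδ : IsLipschitzFree o δ) {K : ℝ≥0} {u : M → ℝ}
    (hu : LipschitzWith K u) (hu0 : u o = 0) {S : Set M} (huS : ∀ x ∈ S, u x = 0) {μ : F}
    (hμ : μ ∈ Submodule.span ℝ (δ '' S)) (γ : F) : |freeLift δ u γ| ≤ K * ‖γ - μ‖ := by
  refine ((freeLift δ u).abs_apply_le_of_mem_span ?_ hμ γ).trans ?_
  · rintro _ ⟨x, hx, rfl⟩
    rw [hδ.freeLift_apply_delta hu hu0, huS x hx]
  · gcongr
    exact hδ.norm_freeLift_le hu hu0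

lemma abs_freeLift_sub_le_of_eqOn (hδ : IsLipschitzFree o δ) {Ku Kv : ℝ≥0} {u v : M → ℝ}
    (hu : LipschitzWith Ku u) (hv : LipschitzWith Kv v) (hu0 : u o = 0) (hv0 : v o = 0)
    {S : Set M} (huv : EqOn u v S) {μ : F} (hμ : μ ∈ Submodule.span ℝ (δ '' S)) (γ : F) :
    |freeLift δ u γ - freeLift δ v γ| ≤ (Ku + Kv) * ‖γ - μ‖ := by
  rw [← hδ.freeLift_sub_apply hu hv hu0 hv0]
  exact_mod_cast hδ.abs_freeLift_le_of_eqOn_zero (hu.sub hv) (by simp [hu0, hv0])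
    (fun x hx => sub_eq_zero.2 (huv hx)) hμ γ

lemma tendsto_freeLift_apply (hδ : IsLipschitzFree o δ) {K : ℝ≥0} {u : ℕ → M → ℝ}
    (hu : ∀ k, LipschitzWith K (u k)) (hu0 : ∀ k, u k o = 0)
    (hlim : ∀ x, ∀ᶠ k in atTop, u k x = 0) (γ : F) :
    Tendsto (fun k => freeLift δ (u k) γ) atTop (𝓝 0) := by
  refine Metric.tendsto_nhds.2 fun ε hε => ?_
  obtain ⟨S, μ, hμ, hγμ⟩ := hδ.exists_finset_norm_sub_lt γ (show 0 < ε / (K + 1) by positivity)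
  filter_upwards [(Filter.eventually_all_finset S).2 fun x _ => hlim x] with k hk
  rw [Real.dist_0_eq_abs]
  calc |freeLift δ (u k) γ| ≤ K * ‖γ - μ‖ :=
        hδ.abs_freeLift_le_of_eqOn_zero (hu k) (hu0 k) hk hμ γ
    _ ≤ K * (ε / (K + 1)) := by gcongr
    _ < ε := by
      rw [mul_div_assoc', div_lt_iff₀ (by positivity)]
      nlinarith

lemma freeLift_le_of_telescoping (hδ : IsLipschitzFree o δ) {K : ℝ≥0} {f : M → ℝ}
    {w : ℕ → M → ℝ} (hf : LipschitzWith K f) (hf0 : f o = 0)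
    (hfw : ∀ k, LipschitzWith K fun x => f x * w k x) {γ : F} {a : ℝ} {e : ℕ → ℝ}
    (h0 : freeLift δ (fun x => f x * (1 - w 0 x)) γ ≤ a)
    (hstep : ∀ k, freeLift δ (fun x => f x * (w k x - w (k + 1) x)) γ ≤ e k) (k : ℕ) :
    freeLift δ f γ ≤ a + ∑ j ∈ Finset.range k, e j + freeLift δ (fun x => f x * w k x) γ := by
  have hfw0 : ∀ k, f o * w k o = 0 := fun k => by rw [hf0, zero_mul]
  induction k with
  | zero =>
    simp only [mul_one_sub] at h0
    rw [hδ.freeLift_sub_apply hf (hfw 0) hf0 (hfw0 0)] at h0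
    simp only [Finset.range_zero, Finset.sum_empty, add_zero]
    linarith
  | succ k ih =>
    have hk := hstep k
    simp only [mul_sub] at hk
    rw [hδ.freeLift_sub_apply (hfw k) (hfw (k + 1)) (hfw0 k) (hfw0 (k + 1))] at hk
    rw [Finset.sum_range_succ]
    linarith

lemma isWUC_freeLift (hδ : IsLipschitzFree o δ) {Λ : ℝ≥0} {v : ℕ → M → ℝ}
    (hv : ∀ j, LipschitzWith Λ (v j)) (hv0 : ∀ j, v j o = 0)
    (hd : Pairwise fun i j => Disjoint (support (v i)) (support (v j))) :
    IsWUC fun j => freeLift δ (v j) := by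
  intro ψ
  refine summable_of_sum_range_le (fun _ => abs_nonneg _) (c := ‖ψ‖ * (2 * Λ)) fun n => ?_
  set σ : ℕ → ℝ := fun j => if 0 ≤ ψ (freeLift δ (v j)) then 1 else -1
  have hσ : ∀ j, |ψ (freeLift δ (v j))| = ψ (σ j • freeLift δ (v j)) := fun j => by
    simp only [σ, map_smul, smul_eq_mul]
    split_ifs with h
    · rw [one_mul, abs_of_nonneg h]
    · rw [neg_one_mul, abs_of_neg (not_le.1 h)]
  have hσv : ∀ j, LipschitzWith Λ fun x => σ j * v j x := fun j => by
    simp only [σ]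
    split_ifs
    · simp only [one_mul]; exact hv j
    · simp only [neg_one_mul]; exact (hv j).neg
  have hu : LipschitzWith (2 * Λ) fun x => ∑ j ∈ Finset.range n, σ j * v j x :=
    LipschitzWith.sum_of_pairwiseDisjoint _ (fun j _ => hσv j)
      (Set.PairwiseDisjoint.mono (hd.set_pairwise _) fun j => support_mul_subset_right _ _)
  have hrep : ∀ x, (∑ j ∈ Finset.range n, σ j • freeLift δ (v j)) (δ x)
      = ∑ j ∈ Finset.range n, σ j * v j x := fun x => by
    simp [hδ.freeLift_apply_delta (hv _) (hv0 _)]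
  calc ∑ j ∈ Finset.range n, |ψ (freeLift δ (v j))|
      = ψ (∑ j ∈ Finset.range n, σ j • freeLift δ (v j)) := by simp only [hσ, map_sum]
    _ ≤ ‖ψ‖ * ‖∑ j ∈ Finset.range n, σ j • freeLift δ (v j)‖ :=
      (le_abs_self _).trans (ψ.le_opNorm _)
    _ ≤ ‖ψ‖ * (2 * Λ) := by
      gcongr
      exact_mod_cast hδ.norm_le_of_apply_delta hu (by simp [hv0]) hrep

/-- The engine of both localization steps: disjointly supported, uniformly Lipschitz
functions form a WUC series in the dual, so they cannot all pair to at least `c` with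
elements of a (V*)-set. -/
lemma false_of_forall_finset_exists_disjoint (hδ : IsLipschitzFree o δ) {Γ : Set F}
    (hΓ : IsVStarSet Γ) {ι : Type*} (P : ι → Prop) (γ : ι → F) (v : ι → M → ℝ) {Λ : ℝ≥0}
    {c : ℝ} (hc : 0 < c)
    (hP : ∀ i, P i → γ i ∈ Γ ∧ LipschitzWith Λ (v i) ∧ v i o = 0 ∧ c ≤ freeLift δ (v i) (γ i))
    (hstep : ∀ s : Finset ι, (∀ i ∈ s, P i) →
      ∃ j, P j ∧ ∀ i ∈ s, Disjoint (support (v i)) (support (v j))) :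
    False := by
  obtain ⟨f, hfP, hfd⟩ := exists_seq_of_forall_finset_exists P _ hstep
  have hd : Pairwise fun m n => Disjoint (support (v (f m))) (support (v (f n))) :=
    fun m n hmn => hmn.lt_or_gt.elim (hfd m n) fun h => (hfd n m h).symm
  have hW := hδ.isWUC_freeLift (fun n => (hP _ (hfP n)).2.1) (fun n => (hP _ (hfP n)).2.2.1) hd
  obtain ⟨n, hn⟩ := (hΓ _ hW (c / 2) (half_pos hc)).exists
  have := hn _ (hP _ (hfP n)).1
  linarith [(hP _ (hfP n)).2.2.2, le_abs_self (freeLift δ (v (f n)) (γ (f n)))]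

lemma half_le_freeLift_of_eqOn (hδ : IsLipschitzFree o δ) {Ku Kv : ℝ≥0} {u v : M → ℝ}
    (hu : LipschitzWith Ku u) (hv : LipschitzWith Kv v) (hu0 : u o = 0) (hv0 : v o = 0)
    {S : Set M} (huv : EqOn u v S) {μ γ : F} (hμ : μ ∈ Submodule.span ℝ (δ '' S)) {η : ℝ}
    (hγμ : (Ku + Kv) * ‖γ - μ‖ ≤ η / 2) (hη : η < freeLift δ u γ) :
    η / 2 ≤ freeLift δ v γ := by
  have := (abs_le.1 ((hδ.abs_freeLift_sub_le_of_eqOn hu hv hu0 hv0 huv hμ γ).trans hγμ)).2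
  linarith

lemma exists_annulus_localization (hδ : IsLipschitzFree o δ) {r : ℝ≥0} (hr : 0 < r)
    {g : M → ℝ} (hg : LipschitzWith 1 g) (hg0 : g o = 0) {γ : F} {η : ℝ} (hη : 0 < η)
    (hlt : η < freeLift δ (fun x => g x * (1 - plateau {o} r x)) γ) :
    ∃ R : ℝ≥0, ∃ v : M → ℝ, LipschitzWith 6 v ∧ v o = 0 ∧ η / 2 ≤ freeLift δ v γ ∧
      support v ⊆ closedBall o R \ closedBall o r := by
  set w : M → ℝ := fun x => g x * (1 - plateau {o} r x)
  have hgo := abs_le_dist_of_lipschitzWith_one hg hg0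
  have hw : LipschitzWith 4 w := by
    rw [show w = fun x => g x - g x * plateau {o} r x from funext fun x => by ring]
    exact (hg.sub (hg.mul_plateau_singleton hgo hr)).weaken (by norm_num)
  have hwo : ∀ x, |w x| ≤ dist x o := fun x => by
    refine (abs_mul _ _).trans_le ((mul_le_of_le_one_right (abs_nonneg _) ?_).trans (hgo x))
    exact abs_le.2 ⟨by linarith [plateau_le_one {o} r x], by linarith [plateau_nonneg {o} r x]⟩
  have hw0 : w o = 0 := by simp [w, hg0]
  have hwr : support w ⊆ (closedBall o r)ᶜ := fun x hx hxr => hx <| by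
    simp [w, plateau_eq_one (by simpa using hxr : infDist x {o} ≤ r)]
  obtain ⟨S, μ, hμ, hγμ⟩ := hδ.exists_finset_norm_sub_lt γ (show 0 < η / 20 by positivity)
  set R : ℝ≥0 := r + ∑ p ∈ S, nndist p o
  have hR : 0 < R := add_pos_of_pos_of_nonneg hr zero_le
  have hSR : ∀ p ∈ S, dist p o ≤ R := fun p hp => by
    have := Finset.single_le_sum (f := fun p => nndist p o) (fun _ _ => zero_le) hp
    rw [← coe_nndist]
    exact_mod_cast this.trans le_add_self
  set v : M → ℝ := fun x => w x * plateau {o} R x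
  have hv : LipschitzWith 6 v := (hw.mul_plateau_singleton hwo hR).weaken (by norm_num)
  refine ⟨2 * R, v, hv, by simp [v, hw0], ?_, fun x hx => ?_⟩
  · refine hδ.half_le_freeLift_of_eqOn hw hv hw0 (by simp [v, hw0]) (S := S) (fun p hp => ?_) hμ
      ?_ hlt
    · simp [v, plateau_eq_one (by simpa using hSR p hp : infDist p {o} ≤ R)]
    · norm_num
      linarith
  · have hxp : plateau {o} R x ≠ 0 := right_ne_zero_of_mul hx
    exact ⟨mem_closedBall.2 (by simpa using (infDist_lt_of_plateau_ne_zero hR hxp).le),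
      hwr (left_ne_zero_of_mul hx)⟩

lemma exists_radius_freeLift_le (hδ : IsLipschitzFree o δ) {Γ : Set F} (hΓ : IsVStarSet Γ)
    {η : ℝ} (hη : 0 < η) :
    ∃ r : ℝ≥0, 0 < r ∧ ∀ γ ∈ Γ, ∀ g : M → ℝ, LipschitzWith 1 g → g o = 0 →
      freeLift δ (fun x => g x * (1 - plateau {o} r x)) γ ≤ η := by
  by_contra! hcon
  refine hδ.false_of_forall_finset_exists_disjoint hΓ (ι := F × (M → ℝ) × ℝ≥0)
    (fun c => c.1 ∈ Γ ∧ LipschitzWith 6 c.2.1 ∧ c.2.1 o = 0 ∧ η / 2 ≤ freeLift δ c.2.1 c.1 ∧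
      support c.2.1 ⊆ closedBall o c.2.2)
    Prod.fst (fun c => c.2.1) (half_pos hη) (fun c hc => ⟨hc.1, hc.2.1, hc.2.2.1, hc.2.2.2.1⟩)
    fun C hC => ?_
  set r : ℝ≥0 := 1 + ∑ c ∈ C, c.2.2
  have hCr : ∀ c ∈ C, c.2.2 ≤ r := fun c hc =>
    (Finset.single_le_sum (f := fun c => c.2.2) (fun _ _ => zero_le) hc).trans le_add_self
  obtain ⟨γ, hγ, g, hg, hg0, hlt⟩ := hcon r (by positivity)
  obtain ⟨R, v, hv, hv0, hvγ, hvR⟩ := hδ.exists_annulus_localization (by positivity) hg hg0 hη hlt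
  refine ⟨(γ, v, R), ⟨hγ, hv, hv0, hvγ, fun x hx => (hvR hx).1⟩, fun c hc => ?_⟩
  exact Set.disjoint_left.2 fun x hxc hxv => (hvR hxv).2 <|
    closedBall_subset_closedBall (by exact_mod_cast hCr c hc) ((hC c hc).2.2.2.2 hxc)

lemma exists_finset_localization (hδ : IsLipschitzFree o δ) {Kw B : ℝ≥0} {w : M → ℝ}
    (hw : LipschitzWith Kw w) (hw0 : w o = 0) (hwB : ∀ x, |w x| ≤ B) {γ : F} {η : ℝ}
    (hη : 0 < η) (hlt : η < freeLift δ w γ) {e : ℝ≥0} (he : 0 < e) :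
    ∃ Q : Finset M, (∀ p ∈ Q, p = o ∨ w p ≠ 0) ∧ ∃ v : M → ℝ,
      LipschitzWith (Kw + B * e⁻¹) v ∧ v o = 0 ∧ η / 2 ≤ freeLift δ v γ ∧
      support v ⊆ support w ∩ thickening (2 * e) Q := by
  classical
  obtain ⟨S, μ, hμ, hγμ⟩ :=
    hδ.exists_finset_norm_sub_lt γ (show 0 < η / (2 * (Kw + (Kw + B * e⁻¹) + 1)) by positivity)
  set Q := insert o (S.filter fun p => w p ≠ 0)
  set v : M → ℝ := fun x => w x * plateau Q e x
  have hv : LipschitzWith (Kw + B * e⁻¹) v :=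
    hw.mul_of_abs_le (lipschitzWith_plateau (Q : Set M) e) (abs_plateau_le_one (Q : Set M) e)
      fun x _ => hwB x
  have hwv : EqOn w v S := fun p hp => by
    by_cases hwp : w p = 0
    · simp [v, hwp]
    · have hpQ : p ∈ (Q : Set M) :=
        Finset.mem_insert_of_mem (Finset.mem_filter.2 ⟨hp, hwp⟩)
      simp [v, plateau_eq_one ((infDist_zero_of_mem hpQ).trans_le e.2)]
  refine ⟨Q, fun p hp => ?_, v, hv, by simp [v, hw0], ?_, fun x hx => ?_⟩
  · rcases Finset.mem_insert.1 hp with h | h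
    · exact Or.inl h
    · exact Or.inr (Finset.mem_filter.1 h).2
  · refine hδ.half_le_freeLift_of_eqOn hw hv hw0 (by simp [v, hw0]) hwv hμ ?_ hlt
    rw [lt_div_iff₀ (by positivity)] at hγμ
    push_cast at hγμ ⊢
    nlinarith [norm_nonneg (γ - μ)]
  · exact ⟨left_ne_zero_of_mul hx, support_plateau_subset (Finset.coe_nonempty.2
      (Finset.insert_nonempty _ _)) he (right_ne_zero_of_mul hx)⟩

end IsLipschitzFree

/-- One stage of the construction of the compact set: the points of `net` have been
placed in it, and `weight` is the cutoff selecting the region still to be localized. -/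
structure Stage {M : Type*} [MetricSpace M] (o : M) (r : ℝ≥0) where
  net : Finset M
  weight : M → ℝ
  base_mem_net : o ∈ net
  exists_lipschitzWith : ∃ K, LipschitzWith K weight
  weight_nonneg : ∀ x, 0 ≤ weight x
  weight_le_one : ∀ x, weight x ≤ 1
  dist_le_of_weight_ne_zero : ∀ x, weight x ≠ 0 → dist x o ≤ r

namespace Stage

variable {M : Type*} [MetricSpace M] {o : M} {r : ℝ≥0} {F : Type*} [NormedAddCommGroup F]
  [NormedSpace ℝ F] {δ : M → F}

def initial (hr : 0 < r) : Stage o (2 * r) where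
  net := {o}
  weight := plateau {o} r
  base_mem_net := Finset.mem_singleton_self o
  exists_lipschitzWith := ⟨_, lipschitzWith_plateau {o} r⟩
  weight_nonneg := plateau_nonneg {o} r
  weight_le_one := plateau_le_one {o} r
  dist_le_of_weight_ne_zero x hx := by
    simpa using (infDist_lt_of_plateau_ne_zero hr hx).le

def refine (s : Stage o r) (N : Finset M) (hN : s.net ⊆ N) (d : ℝ≥0) : Stage o r where
  net := N
  weight x := min (s.weight x) (plateau (N : Set M) d x)
  base_mem_net := hN s.base_mem_net
  exists_lipschitzWith := by
    obtain ⟨K, hK⟩ := s.exists_lipschitzWith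
    exact ⟨max K d⁻¹, hK.min (lipschitzWith_plateau (N : Set M) d)⟩
  weight_nonneg x := le_min (s.weight_nonneg x) (plateau_nonneg (N : Set M) d x)
  weight_le_one x := (min_le_left _ _).trans (s.weight_le_one x)
  dist_le_of_weight_ne_zero x hx := s.dist_le_of_weight_ne_zero x fun h => hx <| by
    rw [h, min_eq_left (plateau_nonneg (N : Set M) d x)]

lemma exists_localization_off_thickening (s : Stage o r) (hδ : IsLipschitzFree o δ) {KH : ℝ≥0}
    (hH : LipschitzWith KH s.weight) {N : Finset M} (hsN : s.net ⊆ N) {d : ℝ≥0} (hd : 0 < d)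
    {g : M → ℝ} (hg : LipschitzWith 1 g) (hg0 : g o = 0) {γ : F} {η : ℝ} (hη : 0 < η)
    (hlt : η < freeLift δ
      (fun x => g x * (s.weight x - min (s.weight x) (plateau (N : Set M) d x))) γ) :
    ∃ Q : Finset M, (∀ p ∈ Q, p ∈ s.net ∨ s.weight p ≠ 0) ∧ ∃ v : M → ℝ,
      LipschitzWith (1 + r * (KH + max KH d⁻¹) + r * (d / 4)⁻¹) v ∧ v o = 0 ∧
      η / 2 ≤ freeLift δ v γ ∧ support v ⊆ thickening (d / 2) (Q : Set M) \ thickening d N := by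
  set fac : M → ℝ := fun x => s.weight x - min (s.weight x) (plateau (N : Set M) d x)
  have hfac : LipschitzWith (KH + max KH d⁻¹) fac := hH.sub (hH.min (lipschitzWith_plateau _ d))
  have hfac01 : ∀ x, |fac x| ≤ 1 := fun x => abs_le.2
    ⟨by linarith [min_le_left (s.weight x) (plateau (N : Set M) d x)],
      by linarith [s.weight_le_one x, le_min (s.weight_nonneg x) (plateau_nonneg (N : Set M) d x)]⟩
  have hfacH : ∀ x, fac x ≠ 0 → s.weight x ≠ 0 := fun x hx h => hx <| by
    simp only [fac, h, min_eq_left (plateau_nonneg (N : Set M) d x), sub_self]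
  have hN : (N : Set M).Nonempty := ⟨o, hsN s.base_mem_net⟩
  have hfacN : ∀ x, fac x ≠ 0 → x ∉ thickening d (N : Set M) := fun x hx hxN => hx <| by
    simp only [fac, plateau_eq_one ((mem_thickening_iff_infDist_lt hN).1 hxN).le,
      min_eq_left (s.weight_le_one x), sub_self]
  have hgr : ∀ x, fac x ≠ 0 → |g x| ≤ r := fun x hx =>
    (abs_le_dist_of_lipschitzWith_one hg hg0 x).trans
      (s.dist_le_of_weight_ne_zero x (hfacH x hx))
  have hwr : ∀ x, |g x * fac x| ≤ r := fun x => by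
    by_cases hx : fac x = 0
    · simp [hx]
    · rw [abs_mul]
      simpa using mul_le_mul (hgr x hx) (hfac01 x) (abs_nonneg _) r.2
  obtain ⟨Q, hQ, v, hv, hv0, hvγ, hvQ⟩ := hδ.exists_finset_localization
    (hg.mul_of_abs_le hfac hfac01 hgr) (by simp [hg0]) hwr hη hlt
    (show 0 < d / 4 by positivity)
  refine ⟨Q, fun p hp => ?_, v, hv, hv0, hvγ, fun x hx => ⟨?_, ?_⟩⟩
  · rcases hQ p hp with rfl | h
    · exact Or.inl s.base_mem_net
    · exact Or.inr (hfacH p (right_ne_zero_of_mul h))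
  · exact thickening_mono (le_of_eq (by push_cast; ring)) _ (hvQ hx).2
  · exact hfacN x (right_ne_zero_of_mul (hvQ hx).1)

lemma exists_net_freeLift_le (s : Stage o r) (hδ : IsLipschitzFree o δ) {Γ : Set F}
    (hΓ : IsVStarSet Γ) {η : ℝ} (hη : 0 < η) {d : ℝ≥0} (hd : 0 < d) :
    ∃ N : Finset M, s.net ⊆ N ∧ (∀ p ∈ N, p ∉ s.net → s.weight p ≠ 0) ∧
      ∀ γ ∈ Γ, ∀ g : M → ℝ, LipschitzWith 1 g → g o = 0 →
        freeLift δ (fun x => g x * (s.weight x - min (s.weight x) (plateau (N : Set M) d x))) γ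
          ≤ η := by
  classical
  obtain ⟨KH, hH⟩ := s.exists_lipschitzWith
  by_contra! hcon
  refine hδ.false_of_forall_finset_exists_disjoint hΓ (ι := F × (M → ℝ) × Finset M)
    (fun c => c.1 ∈ Γ ∧ LipschitzWith (1 + r * (KH + max KH d⁻¹) + r * (d / 4)⁻¹) c.2.1 ∧
      c.2.1 o = 0 ∧ η / 2 ≤ freeLift δ c.2.1 c.1 ∧ (∀ p ∈ c.2.2, p ∈ s.net ∨ s.weight p ≠ 0) ∧
      support c.2.1 ⊆ thickening (d / 2) (c.2.2 : Set M))
    Prod.fst (fun c => c.2.1) (half_pos hη) (fun c hc => ⟨hc.1, hc.2.1, hc.2.2.1, hc.2.2.2.1⟩)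
    fun C hC => ?_
  set N := s.net ∪ C.biUnion fun c => c.2.2
  have hNnew : ∀ p ∈ N, p ∉ s.net → s.weight p ≠ 0 := fun p hp hps => by
    obtain ⟨c, hc, hpc⟩ := Finset.mem_biUnion.1 ((Finset.mem_union.1 hp).resolve_left hps)
    exact ((hC c hc).2.2.2.2.1 p hpc).resolve_left hps
  obtain ⟨γ, hγ, g, hg, hg0, hlt⟩ := hcon N Finset.subset_union_left hNnew
  obtain ⟨Q, hQ, v, hv, hv0, hvγ, hvQ⟩ :=
    s.exists_localization_off_thickening hδ hH Finset.subset_union_left hd hg hg0 hη hlt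
  refine ⟨(γ, v, Q), ⟨hγ, hv, hv0, hvγ, hQ, fun x hx => (hvQ hx).1⟩, fun c hc => ?_⟩
  have hcN : (c.2.2 : Set M) ⊆ N :=
    Finset.coe_subset.2 ((Finset.subset_biUnion_of_mem (fun c => c.2.2) hc).trans
      Finset.subset_union_right)
  exact Set.disjoint_left.2 fun x hxc hxv => (hvQ hxv).2 <| thickening_mono (half_le_self d.2) _
    (thickening_subset_of_subset _ hcN ((hC c hc).2.2.2.2.2 hxc))

structure IsRefiningSeq (s : ℕ → Stage o r) (d : ℕ → ℝ≥0) : Prop where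
  net_subset : ∀ k, (s k).net ⊆ (s (k + 1)).net
  weight_ne_zero_of_mem : ∀ k, ∀ p ∈ (s (k + 1)).net, p ∉ (s k).net → (s k).weight p ≠ 0
  weight_succ : ∀ k x, (s (k + 1)).weight x =
    min ((s k).weight x) (plateau ((s (k + 1)).net : Set M) (d k) x)

namespace IsRefiningSeq

variable {s : ℕ → Stage o r} {d : ℕ → ℝ≥0}

lemma net_mono (h : IsRefiningSeq s d) : Monotone fun k => (s k).net :=
  monotone_nat_of_le_succ h.net_subset

lemma weight_ne_zero_of_le (h : IsRefiningSeq s d) {i j : ℕ} (hij : i ≤ j) {x : M}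
    (hx : (s j).weight x ≠ 0) : (s i).weight x ≠ 0 := by
  induction j, hij using Nat.le_induction with
  | base => exact hx
  | succ j _ ih =>
    refine ih fun h0 => hx ?_
    rw [h.weight_succ, h0, min_eq_left (plateau_nonneg _ _ _)]

lemma infDist_lt_of_weight_ne_zero (h : IsRefiningSeq s d) {k : ℕ} (hd : 0 < d k) {x : M}
    (hx : (s (k + 1)).weight x ≠ 0) : infDist x ((s (k + 1)).net : Set M) < 2 * d k := by
  refine infDist_lt_of_plateau_ne_zero hd fun h0 => hx ?_
  rw [h.weight_succ, h0, min_eq_right ((s k).weight_nonneg x)]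

lemma mem_or_infDist_lt (h : IsRefiningSeq s d) {k : ℕ} (hd : 0 < d k) :
    ∀ j, ∀ p ∈ (s j).net, p ∈ (s (k + 1)).net ∨
      infDist p ((s (k + 1)).net : Set M) < 2 * d k := by
  intro j
  induction j with
  | zero => exact fun p hp => Or.inl (h.net_mono (Nat.zero_le _) hp)
  | succ j ih =>
    intro p hp
    rcases le_or_gt (j + 1) (k + 1) with hjk | hkj
    · exact Or.inl (h.net_mono hjk hp)
    by_cases hpj : p ∈ (s j).net
    · exact ih p hpj
    · exact Or.inr (h.infDist_lt_of_weight_ne_zero hd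
        (h.weight_ne_zero_of_le (Nat.lt_succ_iff.1 hkj) (h.weight_ne_zero_of_mem j p hp hpj)))

lemma isCompact_closure_iUnion_net [CompleteSpace M] (h : IsRefiningSeq s d)
    (hd : ∀ k, 0 < d k) (hd0 : Tendsto d atTop (𝓝 0)) :
    IsCompact (closure (⋃ k, ((s k).net : Set M))) := by
  refine (TotallyBounded.closure ?_).isCompact_of_isClosed isClosed_closure
  refine Metric.totallyBounded_iff.2 fun ε hε => ?_
  obtain ⟨k, hk⟩ :=
    ((NNReal.tendsto_coe.2 hd0).eventually (gt_mem_nhds (half_pos hε))).exists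
  refine ⟨(s (k + 1)).net, (s (k + 1)).net.finite_toSet, ?_⟩
  simp only [Set.iUnion_subset_iff]
  intro j p hp
  have hk' : 2 * (d k : ℝ) < ε := by linarith
  rcases h.mem_or_infDist_lt (hd k) j p hp with hp' | hp'
  · exact Set.mem_biUnion hp' (mem_ball_self hε)
  · obtain ⟨q, hq, hpq⟩ := (infDist_lt_iff ⟨o, (s (k + 1)).base_mem_net⟩).1 (hp'.trans hk')
    exact Set.mem_biUnion hq (mem_ball.2 hpq)

lemma eventually_weight_eq_zero (h : IsRefiningSeq s d) (hd : ∀ k, 0 < d k)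
    (hd0 : Tendsto d atTop (𝓝 0)) {x : M} (hx : x ∉ closure (⋃ k, ((s k).net : Set M))) :
    ∀ᶠ k in atTop, (s k).weight x = 0 := by
  obtain ⟨ε, hε, hfar⟩ : ∃ ε > 0, ∀ k, ∀ p ∈ (s k).net, ε ≤ dist x p := by
    rw [Metric.mem_closure_iff] at hx
    push Not at hx
    obtain ⟨ε, hε, hfar⟩ := hx
    exact ⟨ε, hε, fun k p hp => hfar p (Set.mem_iUnion_of_mem k hp)⟩
  obtain ⟨k, hk⟩ :=
    ((NNReal.tendsto_coe.2 hd0).eventually (gt_mem_nhds (half_pos hε))).exists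
  refine eventually_atTop.2 ⟨k + 1, fun j hj => ?_⟩
  by_contra hxj
  obtain ⟨p, hp, hxp⟩ := (infDist_lt_iff ⟨o, (s (k + 1)).base_mem_net⟩).1
    (h.infDist_lt_of_weight_ne_zero (hd k) (h.weight_ne_zero_of_le hj hxj))
  linarith [hfar _ p hp]

lemma abs_mul_abs_weight_sub_le (h : IsRefiningSeq s d) (hd : ∀ k, 0 < d k) {r₀ : ℝ≥0}
    (hr₀ : 0 < r₀) (h0 : (s 0).weight = plateau {o} r₀) {f : M → ℝ} (hf : LipschitzWith 1 f)
    (hfs : ∀ k, ∀ p ∈ (s k).net, f p = 0) (k : ℕ) (x y : M) :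
    |f x| * |(s k).weight x - (s k).weight y| ≤ 3 * dist x y := by
  induction k with
  | zero =>
    rw [h0]
    exact abs_mul_abs_plateau_sub_le hf (singleton_nonempty o)
      (fun p hp => (mem_singleton_iff.1 hp) ▸ hfs 0 o (s 0).base_mem_net) hr₀ x y
  | succ k ih =>
    rw [h.weight_succ, h.weight_succ]
    calc _ ≤ |f x| * max |(s k).weight x - (s k).weight y|
          |plateau ((s (k + 1)).net : Set M) (d k) x - plateau (s (k + 1)).net (d k) y| := by
          gcongr
          exact abs_min_sub_min_le_max _ _ _ _
      _ = max (|f x| * |(s k).weight x - (s k).weight y|) (|f x| *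
          |plateau ((s (k + 1)).net : Set M) (d k) x - plateau (s (k + 1)).net (d k) y|) :=
          mul_max_of_nonneg _ _ (abs_nonneg _)
      _ ≤ 3 * dist x y := max_le ih
          (abs_mul_abs_plateau_sub_le hf ⟨o, (s (k + 1)).base_mem_net⟩ (hfs (k + 1)) (hd k) x y)

lemma lipschitzWith_mul_weight (h : IsRefiningSeq s d) (hd : ∀ k, 0 < d k) {r₀ : ℝ≥0}
    (hr₀ : 0 < r₀) (h0 : (s 0).weight = plateau {o} r₀) {f : M → ℝ} (hf : LipschitzWith 1 f)
    (hfs : ∀ k, ∀ p ∈ (s k).net, f p = 0) (k : ℕ) :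
    LipschitzWith 4 fun x => f x * (s k).weight x :=
  (lipschitzWith_mul_of_abs_mul_sub_le hf (C := 3)
    (fun x => abs_le.2 ⟨by linarith [(s k).weight_nonneg x], (s k).weight_le_one x⟩)
    fun x y _ => h.abs_mul_abs_weight_sub_le hd hr₀ h0 hf hfs k x y).weaken (by norm_num)

end IsRefiningSeq

lemma exists_isRefiningSeq (hδ : IsLipschitzFree o δ) {Γ : Set F} (hΓ : IsVStarSet Γ)
    {r : ℝ≥0} (hr : 0 < r) {d : ℕ → ℝ≥0} (hd : ∀ k, 0 < d k) {e : ℕ → ℝ} (he : ∀ k, 0 < e k) :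
    ∃ s : ℕ → Stage o (2 * r), IsRefiningSeq s d ∧ (s 0).weight = plateau {o} r ∧
      ∀ k, ∀ γ ∈ Γ, ∀ g : M → ℝ, LipschitzWith 1 g → g o = 0 →
        freeLift δ (fun x => g x * ((s k).weight x - (s (k + 1)).weight x)) γ ≤ e k := by
  choose N hN using fun k (t : Stage o (2 * r)) => t.exists_net_freeLift_le hδ hΓ (he k) (hd k)
  let s : ℕ → Stage o (2 * r) := fun k =>
    Nat.rec (initial hr) (fun k t => t.refine (N k t) (hN k t).1 (d k)) k
  exact ⟨s, ⟨fun k => (hN k (s k)).1, fun k => (hN k (s k)).2.1, fun _ _ => rfl⟩, rfl,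
    fun k => (hN k (s k)).2.2⟩

end Stage

namespace IsLipschitzFree

variable {M : Type*} [MetricSpace M] {o : M} {F : Type*} [NormedAddCommGroup F]
  [NormedSpace ℝ F] {δ : M → F}

theorem exists_isCompact_freeLift_le [CompleteSpace M] (hδ : IsLipschitzFree o δ)
    {Γ : Set F} (hΓ : IsVStarSet Γ) {ε : ℝ} (hε : 0 < ε) :
    ∃ K : Set M, IsCompact K ∧ o ∈ K ∧ ∀ γ ∈ Γ, ∀ f : M → ℝ, LipschitzWith 1 f →
      (∀ x ∈ K, f x = 0) → freeLift δ f γ ≤ ε := by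
  obtain ⟨r, hr, hradial⟩ := hδ.exists_radius_freeLift_le hΓ (half_pos hε)
  set d : ℕ → ℝ≥0 := fun k => (1 / 2) ^ k
  have hd : ∀ k, 0 < d k := fun k => by positivity
  have hd0 : Tendsto d atTop (𝓝 0) := tendsto_pow_atTop_nhds_zero_of_lt_one (by norm_num)
    (by norm_num)
  obtain ⟨s, hs, hs0, hlevel⟩ := Stage.exists_isRefiningSeq hδ hΓ hr hd
    (e := fun k => ε / 4 * (1 / 2) ^ k) fun k => by positivity
  set K := closure (⋃ k, ((s k).net : Set M))
  have hoK : o ∈ K := subset_closure (Set.mem_iUnion_of_mem 0 (s 0).base_mem_net)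
  refine ⟨K, hs.isCompact_closure_iUnion_net hd hd0, hoK, fun γ hγ f hf hfK => ?_⟩
  have hf0 : f o = 0 := hfK o hoK
  have hfs : ∀ k, ∀ p ∈ (s k).net, f p = 0 := fun k p hp =>
    hfK p (subset_closure (Set.mem_iUnion_of_mem k hp))
  have hfw := hs.lipschitzWith_mul_weight hd hr hs0 hf hfs
  have htail : Tendsto (fun k => freeLift δ (fun x => f x * (s k).weight x) γ) atTop (𝓝 0) := by
    refine hδ.tendsto_freeLift_apply hfw (fun k => by simp [hf0]) (fun x => ?_) γ
    by_cases hx : x ∈ K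
    · exact Eventually.of_forall fun k => by simp [hfK x hx]
    · filter_upwards [hs.eventually_weight_eq_zero hd hd0 hx] with k hk
      simp [hk]
  refine ge_of_tendsto (by simpa using htail.const_add ε) (Eventually.of_forall fun k => ?_)
  have hgeom : ∑ j ∈ Finset.range k, ε / 4 * (1 / 2) ^ j ≤ ε / 2 := by
    rw [← Finset.mul_sum]
    nlinarith [sum_geometric_two_le k]
  have := hδ.freeLift_le_of_telescoping (hf.weaken (by norm_num)) hf0 hfw
    (hs0 ▸ hradial γ hγ f hf hf0) (fun k => hlevel k γ hγ f hf hf0) k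
  linarith

end IsLipschitzFree

theorem vStarSet_tight_general
    {M : Type*} [MetricSpace M] [CompleteSpace M] (o : M)
    {F : Type*} [NormedAddCommGroup F] [NormedSpace ℝ F]
    (δ : M → F) (hδ : IsLipschitzFree o δ)
    (Γ : Set F) (hΓ : IsVStarSet Γ) :
    ∀ ε > (0 : ℝ), ∃ K : Set M, IsCompact K ∧ o ∈ K ∧
      ∀ γ ∈ Γ, ∃ z ∈ freeSpan δ K, ‖γ - z‖ ≤ ε := by
  intro ε hε
  obtain ⟨K, hK, hoK, hdual⟩ := hδ.exists_isCompact_freeLift_le hΓ (half_pos hε)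
  refine ⟨K, hK, hoK, fun γ hγ => ?_⟩
  have hbound : ∀ φ : F →L[ℝ] ℝ, ‖φ‖ ≤ 1 → (∀ y ∈ freeSpan δ K, φ y = 0) → φ γ ≤ ε / 2 := by
    intro φ hφ hφK
    have hf : LipschitzWith 1 fun x => φ (δ x) :=
      (φ.lipschitz.comp hδ.isometry.lipschitz).weaken (by rw [mul_one]; exact_mod_cast hφ)
    rw [← hδ.freeLift_eq (u := fun x => φ (δ x)) fun _ => rfl]
    exact hdual γ hγ _ hf fun x hx => hφK _ (mem_freeSpan δ hx)
  obtain ⟨z, hz, hγz⟩ :=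
    (freeSpan δ K).exists_norm_sub_lt_of_forall_dual_le hbound (half_lt_self hε)
  exact ⟨z, hz, hγz.le⟩

/-- **(V*)-sets in Lipschitz-free spaces are tight**: if `Γ ⊆ F(M)` is a (V*)-set with
respect to `F(M)`, then for every `ε > 0` there is a compact `K ⊆ M` containing the base
point such that `Γ ⊆ F(K) + ε B_{F(M)}`. -/
theorem vStarSet_tight
    {M : Type*} [MetricSpace M] [CompleteSpace M] (o : M)
    {F : Type*} [NormedAddCommGroup F] [NormedSpace ℝ F] [CompleteSpace F]
    (δ : M → F) (hδ : IsLipschitzFree o δ)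
    (Γ : Set F) (hΓ : IsVStarSet Γ) :
    ∀ ε > (0 : ℝ), ∃ K : Set M, IsCompact K ∧ o ∈ K ∧
      ∀ γ ∈ Γ, ∃ z ∈ freeSpan δ K, ‖γ - z‖ ≤ ε :=
  vStarSet_tight_general o δ hδ Γ hΓ
end
end

section
/- Every (V*)-set in a Lipschitz-free space is separable: if M is a complete pointed metric space and Γ ⊂ F(M) is a (V*)-set with respect to F(M), then Γ is a separable subset of F(M). -/
open Filter Topology Metric Set

noncomputable section

/-!
If `Γ` is not separable, a pigeonhole over countably many classes (a countable union of
separable sets is separable) gives `ε > 0` and `k` such that for every separable `S ⊆ M` some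
`μ ∈ Γ` lies at distance `≥ ε` from `F(S)` and is `ε/4`-close to a combination `∑ aₓ δ(x)` with
`∑ |aₓ| ≤ k` and `‖δ(x)‖ ≤ k`. For such `μ` there is a functional `ψ` with `ψ(μ) ≥ ε/4`, of norm
bounded in terms of `ε` and `k` only, whose restriction to `M` vanishes near `S` and is supported
near a separable set `C`. Iterating with `S` the union of the earlier sets `C` yields functionals
whose restrictions to `M` are uniformly Lipschitz with disjoint supports. Every signed finite sum
of them is then uniformly Lipschitz, so by the duality `F(M)* = Lip₀(M)` the sequence is weakly
unconditionally Cauchy, which contradicts the (V*)-property since `ψₙ(μₙ) ≥ ε/4`.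
-/

open scoped NNReal
open Function TopologicalSpace

def clip (a u : ℝ) : ℝ := max (-a) (min u a)

theorem clip_of_abs_le {a u : ℝ} (h : |u| ≤ a) : clip a u = u := by
  rw [abs_le] at h
  rw [clip, min_eq_left h.2, max_eq_right h.1]

theorem clip_zero_left (u : ℝ) : clip 0 u = 0 := by
  simp [clip]

theorem LipschitzWith.clip {α : Type*} [PseudoEMetricSpace α] {a u : α → ℝ} {Ka Ku : ℝ≥0}
    (ha : LipschitzWith Ka a) (hu : LipschitzWith Ku u) :
    LipschitzWith (max Ka Ku) fun x => _root_.clip (a x) (u x) := by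
  simpa [_root_.clip, max_left_comm Ku, max_comm Ku] using ha.neg.max (hu.min ha)

def softThreshold (t r : ℝ) : ℝ := max (r - t) (min (r + t) 0)

theorem softThreshold_eq_zero {t r : ℝ} (h : |r| ≤ t) : softThreshold t r = 0 := by
  rw [abs_le] at h
  rw [softThreshold, min_eq_right (by linarith), max_eq_right (by linarith)]

theorem abs_softThreshold_sub_le {t : ℝ} (ht : 0 ≤ t) (r : ℝ) : |softThreshold t r - r| ≤ t := by
  rw [softThreshold, abs_le]
  constructor
  · linarith [le_max_left (r - t) (min (r + t) 0)]
  · linarith [max_le (by linarith : r - t ≤ r + t) (min_le_left (r + t) 0)]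

theorem abs_softThreshold_le {t : ℝ} (ht : 0 ≤ t) (r : ℝ) : |softThreshold t r| ≤ |r| := by
  rw [softThreshold, abs_le]
  constructor
  · exact le_max_of_le_right (le_min (by linarith [neg_abs_le r]) (by linarith [abs_nonneg r]))
  · exact max_le (by linarith [le_abs_self r]) ((min_le_right _ _).trans (abs_nonneg r))

theorem lipschitzWith_one_softThreshold (t : ℝ) : LipschitzWith 1 (softThreshold t) := by
  show LipschitzWith 1 fun r => max (r - t) (min (r + t) 0)
  simpa using (LipschitzWith.id.sub (LipschitzWith.const t)).max
    ((LipschitzWith.id.add (LipschitzWith.const t)).min (LipschitzWith.const 0))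

theorem abs_le_infDist_of_lipschitzWith_one_s8 {M : Type*} [PseudoMetricSpace M] {f : M → ℝ}
    (hf : LipschitzWith 1 f) {S : Set M} (hS : S.Nonempty) (hfS : ∀ y ∈ S, f y = 0) (x : M) :
    |f x| ≤ infDist x S :=
  (le_infDist hS).2 fun y hy => by
    simpa [hfS y hy, Real.dist_eq] using hf.dist_le_mul x y

theorem exists_lipschitzWith_localization {M : Type*} [PseudoMetricSpace M] {u : M → ℝ}
    (hu : LipschitzWith 1 u) (C : Set M) {t : ℝ≥0} (ht : 0 < t) (D : ℝ≥0) :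
    ∃ g : M → ℝ, LipschitzWith (max 1 (D / t)) g ∧ (∀ x ∈ C, g x = clip D (u x)) ∧
      (∀ x, u x = 0 → g x = 0) ∧ ∀ x, g x ≠ 0 → infDist x C < t := by
  set K := D / t
  set w : M → ℝ := fun x => max 0 (D - K * infDist x C)
  have hw : LipschitzWith K w := by
    simpa using ((LipschitzWith.const (D : ℝ)).sub
      ((lipschitzWith_smul (K : ℝ)).comp (lipschitz_infDist_pt C))).const_max 0
  have hw0 : ∀ x, 0 ≤ w x := fun x => le_max_left _ _
  refine ⟨fun x => clip (w x) (u x), by simpa [max_comm] using hw.clip hu, fun x hx => ?_,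
    fun x hx => ?_, fun x hx => ?_⟩
  · simp [w, infDist_zero_of_mem hx]
  · simpa [hx] using clip_of_abs_le (by simpa using hw0 x)
  · have hwx : 0 < D - K * infDist x C := by
      by_contra! h
      exact hx (by simp [w, max_eq_left h, clip_zero_left])
    have hKt : (K : ℝ) * t = D := by
      simp [K, div_mul_cancel₀ _ (NNReal.coe_pos.2 ht).ne']
    exact lt_of_mul_lt_mul_left (by linarith) K.coe_nonneg

theorem exists_forall_isSeparable_of_countable {X ι : Type*} [TopologicalSpace X] [Countable ι]
    {P : ι → Set X → Prop} (hP : ∀ i, Antitone (P i))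
    (h : ∀ S, IsSeparable S → ∃ i, P i S) : ∃ i, ∀ S, IsSeparable S → P i S := by
  by_contra! hcon
  choose S hS hPS using hcon
  obtain ⟨i, hi⟩ := h (⋃ i, S i) (IsSeparable.iUnion hS)
  exact hPS i (hP i (Set.subset_iUnion S i) hi)

/-- Each new `b` is chosen for `S` the union of the earlier sets `C`, so it vanishes where the
earlier functions live. -/
theorem exists_seq_pairwise_disjoint_support {M β : Type*} [PseudoMetricSpace M] [Nonempty M]
    {Q : β → Prop} {g : β → M → ℝ} {t : ℝ}
    (h : ∀ S : Set M, IsSeparable S → S.Nonempty → ∃ C : Set M, IsSeparable C ∧ C.Nonempty ∧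
      ∃ b, Q b ∧ (∀ x, infDist x S ≤ t → g b x = 0) ∧ ∀ x, g b x ≠ 0 → infDist x C < t) :
    ∃ b : ℕ → β, (∀ n, Q (b n)) ∧ Pairwise (Disjoint on fun n => support (g (b n))) := by
  classical
  obtain ⟨m₀⟩ := ‹Nonempty M›
  let P : Set M × β → Prop := fun p =>
    IsSeparable p.1 ∧ p.1.Nonempty ∧ Q p.2 ∧ ∀ x, g p.2 x ≠ 0 → infDist x p.1 < t
  let r : Set M × β → Set M × β → Prop := fun p q =>
    Disjoint (support (g p.2)) (support (g q.2))
  have : Std.Symm r := ⟨fun _ _ h => h.symm⟩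
  obtain ⟨f, hfP, hf⟩ := exists_seq_of_forall_finset_exists' P r fun s hs => by
    set S := {m₀} ∪ ⋃ p : s, p.1.1
    have hS : IsSeparable S := (Set.countable_singleton m₀).isSeparable.union
      (IsSeparable.iUnion fun p => (hs p p.2).1)
    obtain ⟨C, hC, hCne, b, hb, hvan, hsupp⟩ := h S hS ⟨m₀, Or.inl rfl⟩
    refine ⟨(C, b), ⟨hC, hCne, hb, hsupp⟩, fun p hp => Set.disjoint_left.2 fun x hx hx' => ?_⟩
    refine hx' (hvan x ?_)
    have hpS : p.1 ⊆ S :=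
      (Set.subset_iUnion (fun p : s => p.1.1) ⟨p, hp⟩).trans Set.subset_union_right
    calc infDist x S ≤ infDist x p.1 := infDist_le_infDist_of_subset hpS (hs p hp).2.1
      _ ≤ t := ((hs p hp).2.2.2 x hx).le
  exact ⟨fun n => (f n).2, fun n => (hfP n).2.2.1, hf⟩

theorem isWUC_of_norm_sum_le {Y : Type*} [SeminormedAddCommGroup Y] [NormedSpace ℝ Y]
    {y : ℕ → Y} {B : ℝ}
    (h : ∀ (s : Finset ℕ) (σ : ℕ → ℝ), (∀ n, |σ n| ≤ 1) → ‖∑ n ∈ s, σ n • y n‖ ≤ B) :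
    IsWUC y := by
  intro φ
  refine summable_of_sum_range_le (c := ‖φ‖ * B) (fun n => abs_nonneg _) fun N => ?_
  let σ : ℕ → ℝ := fun n => SignType.sign (φ (y n))
  have hσ : ∀ n, |σ n| ≤ 1 := fun n => by
    simp only [σ]
    cases SignType.sign (φ (y n)) <;> simp
  calc ∑ n ∈ Finset.range N, |φ (y n)| = φ (∑ n ∈ Finset.range N, σ n • y n) := by
        simp [σ, map_sum, self_mul_sign, mul_comm]
    _ ≤ ‖φ‖ * ‖∑ n ∈ Finset.range N, σ n • y n‖ := (le_abs_self _).trans (φ.le_opNorm _)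
    _ ≤ ‖φ‖ * B := mul_le_mul_of_nonneg_left (h _ σ hσ) (norm_nonneg φ)

/-- At each pair of points at most two of the functions are nonzero, whence the factor `2`. -/
theorem LipschitzWith.sum_mul_of_pairwise_disjoint_support {α ι : Type*} [PseudoMetricSpace α]
    {g : ι → α → ℝ} {K : ℝ≥0} (hg : ∀ i, LipschitzWith K (g i))
    (hdisj : Pairwise (Disjoint on fun i => support (g i))) (s : Finset ι) {σ : ι → ℝ}
    (hσ : ∀ i, |σ i| ≤ 1) : LipschitzWith (2 * K) fun x => ∑ i ∈ s, σ i * g i x := by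
  classical
  have hcard : ∀ z, (s.filter fun i => g i z ≠ 0).card ≤ 1 := fun z =>
    Finset.card_le_one.2 fun i hi j hj => by
      by_contra hij
      exact Set.disjoint_left.1 (hdisj hij) (Finset.mem_filter.1 hi).2 (Finset.mem_filter.1 hj).2
  refine LipschitzWith.of_dist_le_mul fun x y => ?_
  have hterm : ∀ i, |σ i * (g i x - g i y)| ≤
      ((if g i x ≠ 0 then 1 else 0) + (if g i y ≠ 0 then 1 else 0)) * (K * dist x y) := by
    intro i
    have hi : |σ i * (g i x - g i y)| ≤ K * dist x y := by
      rw [abs_mul, ← Real.dist_eq]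
      exact (mul_le_of_le_one_left (abs_nonneg _) (hσ i)).trans ((hg i).dist_le_mul x y)
    by_cases hxy : g i x = 0 ∧ g i y = 0
    · simp [hxy.1, hxy.2]
    · have hcount : (1 : ℝ) ≤ (if g i x ≠ 0 then 1 else 0) + (if g i y ≠ 0 then 1 else 0) := by
        split_ifs <;> simp_all
      exact hi.trans (le_mul_of_one_le_left (by positivity) hcount)
  calc dist (∑ i ∈ s, σ i * g i x) (∑ i ∈ s, σ i * g i y)
      = |∑ i ∈ s, σ i * (g i x - g i y)| := by
        simp [Real.dist_eq, mul_sub, Finset.sum_sub_distrib]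
    _ ≤ ∑ i ∈ s, |σ i * (g i x - g i y)| := Finset.abs_sum_le_sum_abs _ _
    _ ≤ ∑ i ∈ s, ((if g i x ≠ 0 then 1 else 0) + (if g i y ≠ 0 then 1 else 0)) * (K * dist x y) :=
        Finset.sum_le_sum fun i _ => hterm i
    _ = ((s.filter fun i => g i x ≠ 0).card + (s.filter fun i => g i y ≠ 0).card) *
          (K * dist x y) := by
        rw [← Finset.sum_mul, Finset.sum_add_distrib, Finset.sum_boole, Finset.sum_boole]
    _ ≤ (1 + 1) * (K * dist x y) := by
        gcongr <;> exact_mod_cast hcard _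
    _ = 2 * K * dist x y := by ring

theorem Submodule.exists_dual_eq_infDist {E : Type*} [SeminormedAddCommGroup E] [NormedSpace ℝ E]
    (V : Submodule ℝ E) (x : E) :
    ∃ φ : StrongDual ℝ E, ‖φ‖ ≤ 1 ∧ (∀ v ∈ V, φ v = 0) ∧ φ x = infDist x V := by
  obtain ⟨g, hg, hgx⟩ := exists_dual_vector'' ℝ (V.mkQ x)
  refine ⟨g.comp V.mkQL, ?_, fun v hv => by simp [(Submodule.Quotient.mk_eq_zero V).2 hv], ?_⟩
  · refine ContinuousLinearMap.opNorm_le_bound _ zero_le_one fun z => ?_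
    calc ‖g (V.mkQ z)‖ ≤ ‖g‖ * ‖V.mkQ z‖ := g.le_opNorm _
      _ ≤ 1 * ‖z‖ := mul_le_mul hg (Submodule.Quotient.norm_mk_le V z) (norm_nonneg _) zero_le_one
  · exact hgx.trans (QuotientAddGroup.norm_mk (S := V.toAddSubgroup) x)

theorem abs_apply_sub_apply_le {M F : Type*} [NormedAddCommGroup F] [NormedSpace ℝ F]
    (δ : M → F) {φ ψ : StrongDual ℝ F} (hφ : ‖φ‖ ≤ 1) (hψ : ‖ψ‖ ≤ 1) (μ : F) (l : M →₀ ℝ)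
    {t : ℝ} (ht : ∀ x ∈ l.support, |ψ (δ x) - φ (δ x)| ≤ t) :
    |ψ μ - φ μ| ≤ 2 * ‖μ - Finsupp.linearCombination ℝ δ l‖ + t * ∑ x ∈ l.support, |l x| := by
  set ν := Finsupp.linearCombination ℝ δ l
  have hfar : |(ψ - φ) (μ - ν)| ≤ 2 * ‖μ - ν‖ := by
    calc |(ψ - φ) (μ - ν)| ≤ ‖ψ - φ‖ * ‖μ - ν‖ := (ψ - φ).le_opNorm _
      _ ≤ 2 * ‖μ - ν‖ := by
        gcongr
        linarith [norm_sub_le ψ φ]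
  have hnear : |(ψ - φ) ν| ≤ t * ∑ x ∈ l.support, |l x| := by
    calc |(ψ - φ) ν| = |∑ x ∈ l.support, l x * (ψ (δ x) - φ (δ x))| := by
          simp [ν, Finsupp.linearCombination_apply, Finsupp.sum, map_sum]
      _ ≤ ∑ x ∈ l.support, |l x| * t := by
          refine (Finset.abs_sum_le_sum_abs _ _).trans (Finset.sum_le_sum fun x hx => ?_)
          rw [abs_mul]
          exact mul_le_mul_of_nonneg_left (ht x hx) (abs_nonneg _)
      _ = t * ∑ x ∈ l.support, |l x| := by rw [← Finset.sum_mul, mul_comm]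
  calc |ψ μ - φ μ| = |(ψ - φ) (μ - ν) + (ψ - φ) ν| := by
        congr 1
        simp only [map_sub, sub_apply]
        ring
    _ ≤ _ := (abs_add_le _ _).trans (add_le_add hfar hnear)

theorem linearCombination_mem_span_image {M F : Type*} [AddCommGroup F] [Module ℝ F]
    {δ : M → F} (l : M →₀ ℝ) {C : Set M} (hC : ↑l.support ⊆ C) :
    Finsupp.linearCombination ℝ δ l ∈ Submodule.span ℝ (δ '' C) :=
  (Finsupp.mem_span_image_iff_linearCombination ℝ).2
    ⟨l, Finsupp.supported_mono hC (Finsupp.mem_supported_support ℝ l), rfl⟩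

section FreeSpace

variable {M : Type*} [MetricSpace M] {F : Type*} [NormedAddCommGroup F] [NormedSpace ℝ F]
  {δ : M → F}

theorem isSeparable_freeSpan (hδ : Continuous δ) {C : Set M} (hC : IsSeparable C) :
    IsSeparable (freeSpan δ C : Set F) := by
  rw [freeSpan, Submodule.topologicalClosure_coe]
  exact (hC.image hδ).span.closure

theorem freeSpan_mono {S T : Set M} (h : S ⊆ T) : freeSpan δ S ≤ freeSpan δ T :=
  Submodule.topologicalClosure_mono (Submodule.span_mono (Set.image_mono h))

theorem eqOn_freeSpan {φ ψ : StrongDual ℝ F} {C : Set M} (h : ∀ x ∈ C, φ (δ x) = ψ (δ x)) :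
    Set.EqOn φ ψ (freeSpan δ C) := by
  rw [freeSpan, Submodule.topologicalClosure_coe]
  exact ContinuousLinearMap.eqOn_closure_span (by rintro _ ⟨x, hx, rfl⟩; exact h x hx)

theorem exists_pos_infDist_freeSpan (hδ : Continuous δ) {Γ : Set F}
    (hΓ : ¬ IsSeparable Γ) {S : Set M} (hS : IsSeparable S) :
    ∃ μ ∈ Γ, 0 < infDist μ (freeSpan δ S) := by
  by_contra! h
  refine hΓ ((isSeparable_freeSpan hδ hS).mono fun μ hμ => ?_)
  exact ((Submodule.isClosed_topologicalClosure _).mem_iff_infDist_zero ⟨0, zero_mem _⟩).2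
    (le_antisymm (h μ hμ) infDist_nonneg)

namespace IsLipschitzFree

variable {o : M}

theorem lipschitzWith_comp (hδ : IsLipschitzFree o δ) (φ : StrongDual ℝ F) :
    LipschitzWith ‖φ‖₊ fun x => φ (δ x) := by
  have := φ.lipschitz.comp hδ.isometry.lipschitz
  rwa [mul_one] at this

theorem opNorm_le_of_lipschitzWith (hδ : IsLipschitzFree o δ) {φ : StrongDual ℝ F} {K : ℝ≥0}
    (hφ : LipschitzWith K fun x => φ (δ x)) : ‖φ‖ ≤ K := by
  obtain ⟨Φ, hΦ, hΦδ⟩ := hδ.lift K _ hφ (by simp [hδ.map_base])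
  have : Φ = φ := ContinuousLinearMap.ext_on hδ.dense_span (by rintro _ ⟨x, rfl⟩; exact hΦδ x)
  exact this ▸ hΦ

theorem denseRange_linearCombination (hδ : IsLipschitzFree o δ) :
    DenseRange (Finsupp.linearCombination ℝ δ) := by
  rw [DenseRange, ← LinearMap.coe_range, Finsupp.range_linearCombination]
  exact hδ.dense_span

theorem exists_isSeparable_mem_freeSpan (hδ : IsLipschitzFree o δ) (μ : F) :
    ∃ C : Set M, IsSeparable C ∧ μ ∈ freeSpan δ C := by
  obtain ⟨ν, hν, hνμ⟩ := mem_closure_iff_seq_limit.1 (hδ.denseRange_linearCombination μ)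
  choose l hl using hν
  refine ⟨⋃ n, (l n).support, (Set.countable_iUnion fun n =>
    (l n).support.countable_toSet).isSeparable, ?_⟩
  rw [← SetLike.mem_coe, freeSpan, Submodule.topologicalClosure_coe]
  refine mem_closure_of_tendsto hνμ (Eventually.of_forall fun n => ?_)
  rw [← hl n]
  exact linearCombination_mem_span_image _
    (Set.subset_iUnion (fun n => ((l n).support : Set M)) n)

theorem isWUC_of_pairwise_disjoint_support (hδ : IsLipschitzFree o δ)
    {ψ : ℕ → StrongDual ℝ F} {K : ℝ≥0} (hψ : ∀ n, ‖ψ n‖ ≤ K)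
    (hdisj : Pairwise (Disjoint on fun n => support fun x => ψ n (δ x))) : IsWUC ψ :=
  isWUC_of_norm_sum_le (B := (2 * K : ℝ≥0)) fun s σ hσ => hδ.opNorm_le_of_lipschitzWith <| by
    simpa using LipschitzWith.sum_mul_of_pairwise_disjoint_support
      (fun n => (hδ.lipschitzWith_comp (ψ n)).weaken (hψ n)) hdisj s hσ

/-- Separate `μ` from `F(S)` by a norm-one functional `φ`, soft-threshold `φ ∘ δ` at level `t` so
that it vanishes on the `t`-neighbourhood of `S`, and cut it off outside the `t`-neighbourhood of a
separable `C` with `μ ∈ F(C)`. Clipping at height `D` keeps the values at the atoms of the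
approximant `l`, so a norm-one functional agreeing with the result on `F(C)` still nearly agrees
with `φ` at `μ`. -/
theorem exists_localized_functional (hδ : IsLipschitzFree o δ) {S : Set M} (hS : S.Nonempty)
    {μ : F} {ε : ℝ} (hμ : ε ≤ infDist μ (freeSpan δ S)) {t D : ℝ≥0} (ht : 0 < t) (l : M →₀ ℝ)
    (hl : ‖μ - Finsupp.linearCombination ℝ δ l‖ ≤ ε / 4)
    (hlt : t * ∑ x ∈ l.support, |l x| ≤ ε / 4) (hlD : ∀ x ∈ l.support, ‖δ x‖ ≤ D) :
    ∃ C : Set M, IsSeparable C ∧ C.Nonempty ∧ ∃ ψ : StrongDual ℝ F, ‖ψ‖ ≤ (max 1 (D / t) : ℝ≥0) ∧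
      (∀ x, infDist x S ≤ t → ψ (δ x) = 0) ∧ (∀ x, ψ (δ x) ≠ 0 → infDist x C < t) ∧
      ε / 4 ≤ ψ μ := by
  obtain ⟨φ, hφ, hφS, hφμ⟩ := (freeSpan δ S).exists_dual_eq_infDist μ
  set u : M → ℝ := fun x => softThreshold t (φ (δ x))
  have hφδ : LipschitzWith 1 fun x => φ (δ x) :=
    (hδ.lipschitzWith_comp φ).weaken (show ‖φ‖₊ ≤ 1 from hφ)
  have hu : LipschitzWith 1 u := by
    simpa [u, Function.comp_def] using (lipschitzWith_one_softThreshold t).comp hφδ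
  have hu0 : u o = 0 := by simp [u, hδ.map_base, softThreshold_eq_zero]
  have huS : ∀ x, infDist x S ≤ t → u x = 0 := fun x hx => softThreshold_eq_zero <|
    (abs_le_infDist_of_lipschitzWith_one_s8 hφδ hS (fun y hy => hφS _ (mem_freeSpan δ hy)) x).trans hx
  obtain ⟨C₀, hC₀, hμC₀⟩ := hδ.exists_isSeparable_mem_freeSpan μ
  set C := {o} ∪ C₀
  obtain ⟨g, hg, hgC, hgu, hgC'⟩ := exists_lipschitzWith_localization hu C ht D
  obtain ⟨ψ, hψ, hψδ⟩ := hδ.lift _ g hg (hgu o hu0)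
  obtain ⟨ψ₁, hψ₁, hψ₁δ⟩ := hδ.lift 1 (fun x => clip D (u x))
    (by simpa using (LipschitzWith.const (D : ℝ)).clip hu) (by simp [hu0, clip_of_abs_le])
  have hψψ₁ : ψ μ = ψ₁ μ :=
    eqOn_freeSpan (fun x hx => by rw [hψδ, hψ₁δ, hgC x hx])
      (freeSpan_mono Set.subset_union_right hμC₀)
  have hψ₁φ : |ψ₁ μ - φ μ| ≤ 2 * (ε / 4) + ε / 4 := by
    refine (abs_apply_sub_apply_le δ hφ (by simpa using hψ₁) μ l fun x hx => ?_).trans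
      (by gcongr)
    have hφx : |φ (δ x)| ≤ D := by
      simpa using (φ.le_opNorm (δ x)).trans (by nlinarith [norm_nonneg (δ x), hlD x hx])
    rw [hψ₁δ, clip_of_abs_le ((abs_softThreshold_le t.coe_nonneg _).trans hφx)]
    exact abs_softThreshold_sub_le t.coe_nonneg _
  refine ⟨C, (Set.countable_singleton o).isSeparable.union hC₀, ⟨o, Or.inl rfl⟩, ψ, hψ,
    fun x hx => by rw [hψδ, hgu x (huS x hx)], fun x hx => hgC' x (by rwa [← hψδ]), ?_⟩
  linarith [abs_le.1 hψ₁φ]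

theorem exists_uniform_far_approx (hδ : IsLipschitzFree o δ) {Γ : Set F}
    (hΓ : ¬ IsSeparable Γ) :
    ∃ (ε : ℝ≥0) (k : ℕ), 0 < ε ∧ ∀ S : Set M, IsSeparable S → ∃ μ ∈ Γ,
      ε ≤ infDist μ (freeSpan δ S) ∧ ∃ l : M →₀ ℝ, ‖μ - Finsupp.linearCombination ℝ δ l‖ ≤ ε / 4 ∧
        ∑ x ∈ l.support, |l x| ≤ k ∧ ∀ x ∈ l.support, ‖δ x‖ ≤ k := by
  obtain ⟨⟨n, k⟩, h⟩ := exists_forall_isSeparable_of_countable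
    (P := fun (nk : ℕ × ℕ) S => ∃ μ ∈ Γ, ((nk.1 + 1 : ℝ≥0)⁻¹ : ℝ) ≤ infDist μ (freeSpan δ S) ∧
      ∃ l : M →₀ ℝ, ‖μ - Finsupp.linearCombination ℝ δ l‖ ≤ ((nk.1 + 1 : ℝ≥0)⁻¹ : ℝ) / 4 ∧
        ∑ x ∈ l.support, |l x| ≤ nk.2 ∧ ∀ x ∈ l.support, ‖δ x‖ ≤ nk.2)
    (fun nk S T hST ⟨μ, hμ, hd, happrox⟩ => ⟨μ, hμ, hd.trans
      (infDist_le_infDist_of_subset (freeSpan_mono hST) ⟨0, zero_mem _⟩), happrox⟩)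
    fun S hS => by
      obtain ⟨μ, hμΓ, hpos⟩ := exists_pos_infDist_freeSpan hδ.isometry.continuous hΓ hS
      obtain ⟨n, hn⟩ := exists_nat_one_div_lt hpos
      obtain ⟨l, hl⟩ := hδ.denseRange_linearCombination.exists_dist_lt μ
        (by positivity : (0 : ℝ) < (n + 1 : ℝ)⁻¹ / 4)
      obtain ⟨k, hk⟩ := exists_nat_ge (max (∑ x ∈ l.support, |l x|) (∑ x ∈ l.support, ‖δ x‖))
      refine ⟨(n, k), μ, hμΓ, by simpa using hn.le, l, by simpa [← dist_eq_norm] using hl.le,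
        (le_max_left _ _).trans hk, fun x hx => ?_⟩
      exact (Finset.single_le_sum (fun y _ => norm_nonneg (δ y)) hx).trans
        ((le_max_right _ _).trans hk)
  exact ⟨(n + 1 : ℝ≥0)⁻¹, k, by positivity, h⟩

theorem exists_uniform_localized_functionals (hδ : IsLipschitzFree o δ) {Γ : Set F}
    (hΓ : ¬ IsSeparable Γ) :
    ∃ (c t : ℝ) (K : ℝ≥0), 0 < c ∧ ∀ S : Set M, IsSeparable S → S.Nonempty →
      ∃ C : Set M, IsSeparable C ∧ C.Nonempty ∧ ∃ b : F × StrongDual ℝ F,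
        (b.1 ∈ Γ ∧ ‖b.2‖ ≤ K ∧ c ≤ b.2 b.1) ∧
        (∀ x, infDist x S ≤ t → b.2 (δ x) = 0) ∧ ∀ x, b.2 (δ x) ≠ 0 → infDist x C < t := by
  obtain ⟨ε, k, hε, hfar⟩ := hδ.exists_uniform_far_approx hΓ
  set t : ℝ≥0 := ε / (4 * (k + 1))
  have ht : 0 < t := by positivity
  refine ⟨ε / 4, t, max 1 (k / t), by positivity, fun S hS hSne => ?_⟩
  obtain ⟨μ, hμΓ, hμS, l, hl, hlk, hlδ⟩ := hfar S hS
  have hlt : (t : ℝ) * ∑ x ∈ l.support, |l x| ≤ ε / 4 := by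
    have htk : (t : ℝ) * (k + 1) = ε / 4 := by
      simp only [t]
      push_cast
      field_simp
    nlinarith [t.coe_nonneg]
  obtain ⟨C, hC, hCne, ψ, hψ, hvan, hsupp, hψμ⟩ :=
    hδ.exists_localized_functional hSne hμS ht l hl hlt (D := k) (by simpa using hlδ)
  exact ⟨C, hC, hCne, (μ, ψ), ⟨hμΓ, hψ, hψμ⟩, hvan, hsupp⟩

end IsLipschitzFree

end FreeSpace

theorem vStarSet_separable_general
    {M : Type*} [MetricSpace M] (o : M)
    {F : Type*} [NormedAddCommGroup F] [NormedSpace ℝ F]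
    (δ : M → F) (hδ : IsLipschitzFree o δ)
    (Γ : Set F) (hΓ : IsVStarSet Γ) :
    TopologicalSpace.IsSeparable Γ := by
  by_contra hsep
  obtain ⟨c, t, K, hc, hstep⟩ := hδ.exists_uniform_localized_functionals hsep
  have : Nonempty M := ⟨o⟩
  obtain ⟨b, hb, hdisj⟩ := exists_seq_pairwise_disjoint_support hstep
  have hWUC := hδ.isWUC_of_pairwise_disjoint_support (fun n => (hb n).2.1) hdisj
  obtain ⟨N, hN⟩ := (hΓ _ hWUC (c / 2) (by positivity)).exists
  linarith [hN _ (hb N).1, le_abs_self ((b N).2 (b N).1), (hb N).2.2]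

/-- **(V*)-sets in Lipschitz-free spaces are separable**: if `Γ ⊆ F(M)` is a (V*)-set
with respect to `F(M)`, then `Γ` is a separable subset of `F(M)`. -/
theorem vStarSet_separable
    {M : Type*} [MetricSpace M] [CompleteSpace M] (o : M)
    {F : Type*} [NormedAddCommGroup F] [NormedSpace ℝ F] [CompleteSpace F]
    (δ : M → F) (hδ : IsLipschitzFree o δ)
    (Γ : Set F) (hΓ : IsVStarSet Γ) :
    TopologicalSpace.IsSeparable Γ :=
  vStarSet_separable_general o δ hδ Γ hΓ
end
end
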